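/- With V, p(0) as above (Chebyshev nodes on [-1,1], n even), ‖V p(0)‖_1 < (2/π)·log(n+1) + 1. -/

import Mathlib

/-- The `k`-th Chebyshev node on `[-1,1]` (with `k` running over `1,…,n` via `Fin n`). -/
noncomputable def chebNode (n : ℕ) (k : Fin n) : ℝ :=
  Real.cos ((2 * ((k : ℕ) + 1 : ℝ) - 1) * Real.pi / (2 * n))

/-- The orthonormal Chebyshev polynomials: `p₀ = √(1/n)·T₀`, `pⱼ = √(2/n)·Tⱼ` for `j ≥ 1`,
with `Tⱼ(x) = cos(j·arccos x)`. -/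
noncomputable def chebOrtho (n j : ℕ) (x : ℝ) : ℝ :=
  if j = 0 then Real.sqrt (1 / n) else Real.sqrt (2 / n) * Real.cos (j * Real.arccos x)

/-- The matrix `V` with entries `V_{kj} = pⱼ(sₖ)`. -/
noncomputable def chebMatrix (n : ℕ) : Matrix (Fin n) (Fin n) ℝ :=
  fun k j => chebOrtho n (j : ℕ) (chebNode n k)

/-!
Write `θₖ = (2k+1)π/(2n)`, so that `sₖ = cos θₖ` and `0 = cos (π/2)`. The `k`-th entry of `V p(0)`
is `1/n` times the Christoffel–Darboux kernel `∑ⱼ wⱼ cos (j θₖ) cos (j π/2)` (`w₀ = 1`, `wⱼ = 2`),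
and multiplying that kernel by `cos θₖ - cos (π/2)` telescopes. Since `cos (n θₖ) = 0` and
`|cos (n π/2)| = 1` for even `n`, every entry has absolute value `|tan θₖ| / n`.

For `n = 2m` the angles are symmetric about `π/2`, so the 1-norm is `(1/m) ∑_{j<m} tan θⱼ`. Each
`tan θⱼ` with `j < m - 1` is at most the mean of `tan` over the cell `[jh, (j+1)h]`, `h = π/(2m)`
(midpoint rule for the convex function `tan`), and these cells telescope to
`-log cos ((m-1)h) = -log sin h ≤ log m`; the last tangent is `cot (π/(4m)) ≤ 4m/π`. What remains,
`(2/π) log m + 4/π < (2/π) log (2m+1) + 1`, amounts to `4 - π < 2 log 2`.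
-/

open Real Finset

theorem two_mul_le_log_one_add_sub_log_one_sub {x : ℝ} (h0 : 0 ≤ x) (h1 : x < 1) :
    2 * x ≤ log (1 + x) - log (1 - x) := by
  have hx : |x| < 1 := by rwa [abs_of_nonneg h0]
  simpa using le_hasSum (hasSum_log_sub_log_of_abs_lt_one hx) 0 fun j _ => by positivity

theorem two_mul_mul_tan_le_log_cos_sub_log_cos {c δ : ℝ} (hδ : 0 ≤ δ) (hδc : δ ≤ c)
    (hcδ : c + δ < π / 2) : 2 * δ * tan c ≤ log (cos (c - δ)) - log (cos (c + δ)) := by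
  have hcos : 0 < cos c * cos δ :=
    mul_pos (cos_pos_of_mem_Ioo ⟨by linarith [pi_pos], by linarith⟩)
      (cos_pos_of_mem_Ioo ⟨by linarith [pi_pos], by linarith⟩)
  have htan_c : 0 ≤ tan c := tan_nonneg_of_nonneg_of_le_pi_div_two (by linarith) (by linarith)
  have htan_δ : δ ≤ tan δ := le_tan hδ (by linarith)
  have hx0 : 0 ≤ tan c * tan δ := mul_nonneg htan_c (hδ.trans htan_δ)
  have hsin : cos c * cos δ * (tan c * tan δ) = sin c * sin δ := by
    rw [tan_eq_sin_div_cos, tan_eq_sin_div_cos, div_mul_div_comm, mul_div_cancel₀ _ hcos.ne']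
  have hcos_sub : cos (c - δ) = cos c * cos δ * (1 + tan c * tan δ) := by
    rw [cos_sub, mul_add, mul_one, hsin]
  have hcos_add : cos (c + δ) = cos c * cos δ * (1 - tan c * tan δ) := by
    rw [cos_add, mul_sub, mul_one, hsin]
  have hx1 : 0 < 1 - tan c * tan δ := by
    have : 0 < cos (c + δ) := cos_pos_of_mem_Ioo ⟨by linarith [pi_pos], hcδ⟩
    rw [hcos_add] at this
    exact pos_of_mul_pos_right this hcos.le
  rw [hcos_sub, hcos_add, log_mul hcos.ne' (by linarith), log_mul hcos.ne' hx1.ne']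
  calc 2 * δ * tan c ≤ 2 * (tan c * tan δ) := by nlinarith
    _ ≤ log (1 + tan c * tan δ) - log (1 - tan c * tan δ) :=
      two_mul_le_log_one_add_sub_log_one_sub hx0 (by linarith)
    _ = _ := by ring

theorem mul_sum_tan_le_neg_log_cos {h : ℝ} (hh : 0 ≤ h) {M : ℕ} (hM : M * h < π / 2) :
    h * ∑ j ∈ range M, tan ((2 * j + 1) * h / 2) ≤ -log (cos (M * h)) := by
  have hstep : ∀ j ∈ range M, h * tan ((2 * j + 1) * h / 2)
      ≤ log (cos (j * h)) - log (cos ((j + 1 : ℕ) * h)) := by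
    intro j hj
    have hjM : (j + 1 : ℝ) ≤ M := by exact_mod_cast mem_range.mp hj
    have key := two_mul_mul_tan_le_log_cos_sub_log_cos (c := (2 * j + 1) * h / 2) (δ := h / 2)
      (by positivity) (by nlinarith [(j.cast_nonneg : (0 : ℝ) ≤ j)]) (by nlinarith)
    rwa [show 2 * (h / 2) = h by ring, show (2 * j + 1) * h / 2 - h / 2 = j * h by ring,
      show (2 * j + 1) * h / 2 + h / 2 = ((j + 1 : ℕ) : ℝ) * h by push_cast; ring] at key
  calc h * ∑ j ∈ range M, tan ((2 * j + 1) * h / 2)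
      ≤ ∑ j ∈ range M, (log (cos (j * h)) - log (cos ((j + 1 : ℕ) * h))) := by
        rw [mul_sum]; exact sum_le_sum hstep
    _ = -log (cos (M * h)) := by
        rw [sum_range_sub' (fun j : ℕ => log (cos (j * h)))]; simp

theorem tan_pi_div_two_sub_le_inv {x : ℝ} (hx0 : 0 < x) (hx : x < π / 2) :
    tan (π / 2 - x) ≤ x⁻¹ := by
  rw [tan_pi_div_two_sub]
  exact inv_anti₀ hx0 (lt_tan hx0 hx).le

theorem cos_sub_cos_mul_sum_cos_mul_cos (θ φ : ℝ) (N : ℕ) :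
    (cos θ - cos φ) * ∑ j ∈ range (N + 1), (if j = 0 then 1 else 2) * (cos (j * θ) * cos (j * φ))
      = cos ((N + 1) * θ) * cos (N * φ) - cos (N * θ) * cos ((N + 1) * φ) := by
  induction N with
  | zero => simp
  | succ N ih =>
    rw [sum_range_succ, mul_add, ih, if_neg N.succ_ne_zero]
    push_cast
    have hθ : ((N + 1 + 1 : ℝ)) * θ = (N + 1) * θ + θ := by ring
    have hφ : ((N + 1 + 1 : ℝ)) * φ = (N + 1) * φ + φ := by ring
    have hθ' : (N : ℝ) * θ = (N + 1) * θ - θ := by ring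
    have hφ' : (N : ℝ) * φ = (N + 1) * φ - φ := by ring
    rw [hθ, hφ, hθ', hφ', cos_add, cos_add, cos_sub, cos_sub]
    ring

theorem Finset.sum_range_two_mul_of_reflect {M : Type*} [AddCommMonoid M] (f : ℕ → M) {m : ℕ}
    (hf : ∀ k < m, f (2 * m - 1 - k) = f k) :
    ∑ k ∈ range (2 * m), f k = 2 • ∑ k ∈ range m, f k := by
  rw [two_mul, sum_range_add, two_nsmul, ← sum_range_reflect (fun k => f (m + k)) m]
  congr 1
  refine sum_congr rfl fun k hk => ?_
  have hk := mem_range.mp hk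
  rw [← hf k hk]
  congr 1
  omega

noncomputable def chebAngle (n k : ℕ) : ℝ := (2 * k + 1) * π / (2 * n)

theorem chebOrtho_cos_mul_chebOrtho_cos (n j : ℕ) {θ φ : ℝ} (hθ : θ ∈ Set.Icc 0 π)
    (hφ : φ ∈ Set.Icc 0 π) :
    chebOrtho n j (cos θ) * chebOrtho n j (cos φ)
      = (if j = 0 then 1 else 2) / n * (cos (j * θ) * cos (j * φ)) := by
  rw [chebOrtho, chebOrtho, arccos_cos hθ.1 hθ.2, arccos_cos hφ.1 hφ.2]
  split_ifs with hj
  · rw [Real.mul_self_sqrt (by positivity)]; simp [hj]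
  · rw [mul_mul_mul_comm, Real.mul_self_sqrt (by positivity)]

theorem chebNode_eq_cos_chebAngle (n : ℕ) (k : Fin n) : chebNode n k = cos (chebAngle n k) := by
  rw [chebNode, chebAngle]
  ring_nf

theorem chebAngle_mem_Ioo {n k : ℕ} (hk : k < n) : chebAngle n k ∈ Set.Ioo 0 π := by
  have hkn : (k : ℝ) + 1 ≤ n := by exact_mod_cast hk
  have hn : (0 : ℝ) < n := by linarith [k.cast_nonneg (α := ℝ)]
  refine ⟨div_pos (by positivity) (by positivity), ?_⟩
  rw [chebAngle, div_lt_iff₀ (by positivity)]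
  nlinarith [pi_pos]

theorem natCast_mul_chebMatrix_mulVec_apply (n : ℕ) (k : Fin n) :
    n * (chebMatrix n).mulVec (fun j : Fin n => chebOrtho n j 0) k
      = ∑ j ∈ range n, (if j = 0 then 1 else 2)
          * (cos (j * chebAngle n k) * cos (j * (π / 2))) := by
  have hn : (n : ℝ) ≠ 0 := by have := k.pos; positivity
  have hθ := Set.Ioo_subset_Icc_self (chebAngle_mem_Ioo k.isLt)
  have hπ2 : π / 2 ∈ Set.Icc 0 π := ⟨by positivity, by linarith [pi_pos]⟩
  simp only [Matrix.mulVec, dotProduct, chebMatrix, chebNode_eq_cos_chebAngle]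
  rw [← cos_pi_div_two, Fin.sum_univ_eq_sum_range (fun j => chebOrtho n j (cos (chebAngle n k)) *
    chebOrtho n j (cos (π / 2))), mul_sum]
  refine sum_congr rfl fun j _ => ?_
  rw [chebOrtho_cos_mul_chebOrtho_cos _ _ hθ hπ2]
  field_simp

theorem cos_natCast_mul_chebAngle {n : ℕ} (hn : n ≠ 0) (k : ℕ) : cos (n * chebAngle n k) = 0 :=
  cos_eq_zero_iff.mpr ⟨k, by rw [chebAngle]; field_simp; push_cast; ring⟩

theorem cos_mul_chebMatrix_mulVec_apply (n : ℕ) (k : Fin n) :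
    cos (chebAngle n k) * (n * (chebMatrix n).mulVec (fun j : Fin n => chebOrtho n j 0) k)
      = -(sin (n * chebAngle n k) * sin (chebAngle n k) * cos (n * (π / 2))) := by
  set θ := chebAngle n k
  obtain ⟨N, hN⟩ : ∃ N, n = N + 1 := ⟨n - 1, by have := k.isLt; omega⟩
  have hNn : (N : ℝ) + 1 = n := by rw [hN]; push_cast; ring
  have hnθ : cos (n * θ) = 0 := cos_natCast_mul_chebAngle (by omega) k
  have hNθ : cos (N * θ) = sin (n * θ) * sin θ := by
    rw [show (N : ℝ) * θ = n * θ - θ by rw [← hNn]; ring, cos_sub, hnθ, zero_mul, zero_add]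
  have hCD := cos_sub_cos_mul_sum_cos_mul_cos θ (π / 2) N
  rw [cos_pi_div_two, sub_zero, ← hN] at hCD
  rw [natCast_mul_chebMatrix_mulVec_apply, hCD, hNn, hnθ, ← hNθ]
  ring

theorem abs_chebMatrix_mulVec_apply {n : ℕ} (hn : Even n) (k : Fin n) :
    |(chebMatrix n).mulVec (fun j : Fin n => chebOrtho n j 0) k| = |tan (chebAngle n k)| / n := by
  have hn0 : (0 : ℝ) < n := by have := k.pos; positivity
  have hsin : 0 < sin (chebAngle n k) := sin_pos_of_mem_Ioo (chebAngle_mem_Ioo k.isLt)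
  have hsin_n : |sin (n * chebAngle n k)| = 1 := by
    have hcos := cos_natCast_mul_chebAngle k.pos.ne' k
    have : sin (n * chebAngle n k) ^ 2 = 1 := by nlinarith [sin_sq_add_cos_sq (n * chebAngle n k)]
    rcases sq_eq_one_iff.mp this with h | h <;> simp [h]
  have hcos_n : |cos (n * (π / 2))| = 1 := by
    obtain ⟨m, rfl⟩ := hn.two_dvd
    rw [show ((2 * m : ℕ) : ℝ) * (π / 2) = m * π by push_cast; ring, cos_nat_mul_pi,
      abs_neg_one_pow]
  have key := congrArg abs (cos_mul_chebMatrix_mulVec_apply n k)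
  rw [abs_neg, abs_mul, abs_mul, abs_mul, abs_mul, hsin_n, hcos_n, abs_of_pos hn0,
    abs_of_pos hsin] at key
  have hcos : |cos (chebAngle n k)| ≠ 0 := by
    intro h
    rw [h] at key
    linarith
  rw [tan_eq_sin_div_cos, abs_div, abs_of_pos hsin, eq_div_iff hn0.ne', eq_div_iff hcos]
  linarith

theorem sum_tan_chebAngle_le {m : ℕ} (hm : 0 < m) :
    ∑ j ∈ range m, tan (chebAngle (2 * m) j) ≤ 2 * m / π * log m + 4 * m / π := by
  obtain ⟨M, rfl⟩ : ∃ M, m = M + 1 := ⟨m - 1, by omega⟩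
  set h : ℝ := π / (2 * (M + 1 : ℕ))
  have hh : 0 < h := by positivity
  have hMh : M * h = π / 2 - h := by simp only [h]; push_cast; field_simp; ring
  have hh2 : h ≤ π / 2 := div_le_div_of_nonneg_left pi_pos.le two_pos (by push_cast; linarith)
  have hangle : ∀ j : ℕ, chebAngle (2 * (M + 1)) j = (2 * j + 1) * h / 2 := fun j => by
    simp only [chebAngle, h]; push_cast; field_simp
  have hsin : 1 / (M + 1 : ℕ) ≤ sin h := by
    convert mul_le_sin hh.le hh2 using 1
    simp only [h]; push_cast; field_simp
  have hinit : h * ∑ j ∈ range M, tan (chebAngle (2 * (M + 1)) j) ≤ log (M + 1 : ℕ) := by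
    simp only [hangle]
    calc _ ≤ -log (cos (M * h)) := mul_sum_tan_le_neg_log_cos hh.le (by linarith)
      _ ≤ -log (1 / (M + 1 : ℕ)) := by
        rw [hMh, cos_pi_div_two_sub]
        exact neg_le_neg (log_le_log (by positivity) hsin)
      _ = log (M + 1 : ℕ) := by rw [one_div, log_inv, neg_neg]
  have hlast : tan (chebAngle (2 * (M + 1)) M) ≤ 4 * (M + 1 : ℕ) / π := by
    rw [hangle, show (2 * M + 1) * h / 2 = π / 2 - h / 2 by linarith]
    calc _ ≤ (h / 2)⁻¹ := tan_pi_div_two_sub_le_inv (by positivity) (by linarith)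
      _ = _ := by simp only [h]; field_simp; ring
  have hh_inv : 2 * ((M + 1 : ℕ) : ℝ) / π = h⁻¹ := by simp only [h]; rw [inv_div]
  calc ∑ j ∈ range (M + 1), tan (chebAngle (2 * (M + 1)) j)
      = ∑ j ∈ range M, tan (chebAngle (2 * (M + 1)) j) + tan (chebAngle (2 * (M + 1)) M) :=
        sum_range_succ _ _
    _ ≤ h⁻¹ * log (M + 1 : ℕ) + 4 * (M + 1 : ℕ) / π :=
        add_le_add ((le_inv_mul_iff₀ hh).mpr hinit) hlast
    _ = _ := by rw [hh_inv]

theorem sum_abs_tan_chebAngle (m : ℕ) :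
    ∑ k ∈ range (2 * m), |tan (chebAngle (2 * m) k)|
      = 2 * ∑ k ∈ range m, tan (chebAngle (2 * m) k) := by
  rw [sum_range_two_mul_of_reflect, nsmul_eq_mul, Nat.cast_two]
  · refine congrArg _ (sum_congr rfl fun k hk => abs_of_nonneg ?_)
    have hkm := mem_range.mp hk
    have hk : (2 * k + 1 : ℝ) ≤ 2 * m := by exact_mod_cast (show 2 * k + 1 ≤ 2 * m by omega)
    refine tan_nonneg_of_nonneg_of_le_pi_div_two (chebAngle_mem_Ioo (by omega)).1.le ?_
    have hm : (0 : ℝ) < m := by exact_mod_cast (show 0 < m by omega)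
    rw [chebAngle, Nat.cast_mul, Nat.cast_two, div_le_div_iff₀ (by positivity) two_pos]
    nlinarith [pi_pos]
  · intro k hk
    have hm : (m : ℝ) ≠ 0 := Nat.cast_ne_zero.mpr (by omega)
    have : chebAngle (2 * m) (2 * m - 1 - k) = π - chebAngle (2 * m) k := by
      rw [chebAngle, chebAngle, Nat.cast_sub (by omega), Nat.cast_sub (by omega)]
      push_cast
      field_simp
      ring
    rw [this, tan_pi_sub, abs_neg]

theorem two_div_pi_mul_log_add_four_div_pi_lt {x : ℝ} (hx : 0 < x) :
    2 / π * log x + 4 / π < 2 / π * log (2 * x + 1) + 1 := by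
  have hlog : log 2 + log x < log (2 * x + 1) := by
    rw [← log_mul two_ne_zero hx.ne']
    exact log_lt_log (by positivity) (by linarith)
  have key : 2 * log x + 4 < 2 * log (2 * x + 1) + π := by
    linarith [log_two_gt_d9, pi_gt_d2]
  calc 2 / π * log x + 4 / π = (2 * log x + 4) / π := by ring
    _ < (2 * log (2 * x + 1) + π) / π := by gcongr
    _ = _ := by field_simp

/-- For `n` even, `‖V p(0)‖₁ < (2/π)·log(n+1) + 1`. -/
theorem chebMatrix_mulVec_one_norm (n : ℕ) (hn : 0 < n) (hne : Even n) :
    ∑ k, |(chebMatrix n).mulVec (fun j : Fin n => chebOrtho n (j : ℕ) 0) k| <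
      (2 / Real.pi) * Real.log (n + 1) + 1 := by
  obtain ⟨m, rfl⟩ := hne.two_dvd
  have hm : 0 < m := by omega
  have hm' : (0 : ℝ) < m := by exact_mod_cast hm
  simp only [abs_chebMatrix_mulVec_apply hne]
  rw [Fin.sum_univ_eq_sum_range (fun k => |tan (chebAngle (2 * m) k)| / (2 * m : ℕ)), ← sum_div,
    sum_abs_tan_chebAngle]
  calc (2 * ∑ k ∈ range m, tan (chebAngle (2 * m) k)) / (2 * m : ℕ)
      = (∑ k ∈ range m, tan (chebAngle (2 * m) k)) / m := by push_cast; field_simp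
    _ ≤ 2 / π * log m + 4 / π := by
      rw [div_le_iff₀ hm']
      calc _ ≤ 2 * m / π * log m + 4 * m / π := sum_tan_chebAngle_le hm
        _ = _ := by ring
    _ < _ := by
      push_cast
      exact two_div_pi_mul_log_add_four_div_pi_lt hm'
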